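/- arXiv:1002.4845 — 3 statements merged into one kernel-verified Lean document; each statement's English description precedes it below -/
import Mathlib

section
/- Let N ≥ 4 be an even natural number. Then in R = (ZMod 2)[x, y] one has the telescoping identity D(∑_{α odd, 1 ≤ α ≤ N-3} x^α y^{N-2-α}) = ∑_{a=1}^{N-2} x^a y^{N-1-a}, i.e. applying D to the sum of the monomials x^α y^{N-2-α} over odd exponents α produces the full diagonal sum ∑_{a=1}^{N-2} x^a y^{N-1-a}. -/
open MvPolynomial Finset

/-- Telescoping identity: in `R = (ZMod 2)[x, y]`, for even `N ≥ 4`, applying the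
derivation `D` (with `D x = x^2`, `D y = y^2`) to the sum of monomials
`x^α y^(N-2-α)` over odd `α` with `1 ≤ α ≤ N-3` yields the full diagonal sum
`∑_{a=1}^{N-2} x^a y^(N-1-a)`. -/
theorem stmt0
    (D : Derivation (ZMod 2) (MvPolynomial (Fin 2) (ZMod 2))
      (MvPolynomial (Fin 2) (ZMod 2)))
    (hx : D (X 0) = X 0 ^ 2) (hy : D (X 1) = X 1 ^ 2)
    (N : ℕ) (hN : 4 ≤ N) (hNeven : Even N) :
    D (∑ α ∈ (Finset.Icc 1 (N - 3)).filter (fun α => Odd α),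
        X 0 ^ α * X 1 ^ (N - 2 - α)) =
      ∑ a ∈ Finset.Icc 1 (N - 2), X 0 ^ a * X 1 ^ (N - 1 - a) := by
  have hsmul : ∀ (n : ℕ), Odd n → ∀ p : MvPolynomial (Fin 2) (ZMod 2), n • p = p := by
    intro n hn p
    rw [← Nat.cast_smul_eq_nsmul (ZMod 2)]
    obtain ⟨k, hk⟩ := hn
    subst hk
    push_cast
    have h2 : (2 : ZMod 2) = 0 := by decide
    rw [h2]
    simp
  have key : ∀ α ∈ (Finset.Icc 1 (N-3)).filter (fun α => Odd α),
      D (X 0 ^ α * X 1 ^ (N - 2 - α)) =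
      X 0 ^ (α+1) * X 1 ^ (N - 1 - (α+1)) + X 0 ^ α * X 1 ^ (N - 1 - α) := by
    intro α hα
    simp only [mem_filter, mem_Icc] at hα
    obtain ⟨⟨h1, h2⟩, hodd⟩ := hα
    have hβodd : Odd (N - 2 - α) := by
      rw [Nat.odd_iff] at hodd ⊢
      have hN2 : N % 2 = 0 := Nat.even_iff.mp hNeven
      omega
    rw [Derivation.leibniz, Derivation.leibniz_pow, Derivation.leibniz_pow, hx, hy,
      hsmul _ hβodd, hsmul _ hodd]
    simp only [smul_eq_mul]
    rw [← pow_add, ← pow_add]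
    have e1 : N - 2 - α - 1 + 2 = N - 1 - α := by omega
    have e2 : α - 1 + 2 = α + 1 := by omega
    have e3 : N - 1 - (α + 1) = N - 2 - α := by omega
    rw [e1, e2, e3]
    ring
  rw [map_sum, Finset.sum_congr rfl key, Finset.sum_add_distrib]
  rw [← Finset.sum_filter_add_sum_filter_not (Finset.Icc 1 (N-2)) (fun a => Odd a)]
  have hN2 : N % 2 = 0 := Nat.even_iff.mp hNeven
  have hfilter : (Finset.Icc 1 (N-3)).filter (fun α => Odd α)
      = (Finset.Icc 1 (N-2)).filter (fun a => Odd a) := by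
    ext a
    simp only [mem_filter, mem_Icc, Nat.odd_iff]
    omega
  have hB : ∑ α ∈ (Finset.Icc 1 (N-3)).filter (fun α => Odd α), X 0 ^ α * X 1 ^ (N-1-α)
      = ∑ a ∈ (Finset.Icc 1 (N-2)).filter (fun a => Odd a),
          (X 0 : MvPolynomial (Fin 2) (ZMod 2)) ^ a * X 1 ^ (N-1-a) := by
    rw [hfilter]
  have hA : ∑ α ∈ (Finset.Icc 1 (N-3)).filter (fun α => Odd α),
        (X 0 : MvPolynomial (Fin 2) (ZMod 2)) ^ (α+1) * X 1 ^ (N-1-(α+1))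
      = ∑ a ∈ (Finset.Icc 1 (N-2)).filter (fun a => ¬ Odd a),
          (X 0 : MvPolynomial (Fin 2) (ZMod 2)) ^ a * X 1 ^ (N-1-a) := by
    apply Finset.sum_nbij' (i := fun α => α + 1) (j := fun a => a - 1)
    · intro a ha
      simp only [mem_filter, mem_Icc, Nat.odd_iff] at ha ⊢
      omega
    · intro a ha
      simp only [mem_filter, mem_Icc, Nat.odd_iff] at ha ⊢
      omega
    · intro a ha
      omega
    · intro a ha
      simp only [mem_filter, mem_Icc, Nat.odd_iff] at ha
      omega
    · intro a ha
      rfl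
  rw [hA, hB, add_comm]
end

section
/- For every natural number q ≥ 0, the element ∑_{a=1}^{2^{q+2}-2} x^a y^{2^{q+2}-1-a} of R = (ZMod 2)[x, y] lies in the range (image) of the derivation D. -/
open MvPolynomial Finset

private abbrev R2 := MvPolynomial (Fin 2) (ZMod 2)

lemma odd_nsmul_eq {z : R2} {n : ℕ} (h : Odd n) : n • z = z := by
  obtain ⟨m, rfl⟩ := h
  rw [nsmul_eq_mul]
  push_cast
  simp [CharTwo.two_eq_zero]

lemma Dkey (D : Derivation (ZMod 2) R2 R2) (hx : D (X 0) = X 0 ^ 2)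
    (hy : D (X 1) = X 1 ^ 2) {a b : ℕ} (ha : Odd a) (hb : Odd b) :
    D (X 0 ^ a * X 1 ^ b) = X 0 ^ (a+1) * X 1 ^ b + X 0 ^ a * X 1 ^ (b+1) := by
  have ha1 : 1 ≤ a := ha.pos
  have hb1 : 1 ≤ b := hb.pos
  have hDx : D (X 0 ^ a) = X 0 ^ (a+1) := by
    rw [Derivation.leibniz_pow, hx, smul_eq_mul, odd_nsmul_eq ha, ← pow_add]
    congr 1
    omega
  have hDy : D (X 1 ^ b) = X 1 ^ (b+1) := by
    rw [Derivation.leibniz_pow, hy, smul_eq_mul, odd_nsmul_eq hb, ← pow_add]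
    congr 1
    omega
  rw [Derivation.leibniz, hDx, hDy, smul_eq_mul, smul_eq_mul]
  ring

lemma sum_Icc_pair {M : Type*} [AddCommMonoid M] (t : ℕ → M) (K : ℕ) :
    ∑ a ∈ Icc 1 (2*K), t a = ∑ j ∈ range K, (t (2*j+1) + t (2*j+2)) := by
  induction K with
  | zero => simp
  | succ n ih =>
    rw [sum_range_succ, ← ih, show 2*(n+1) = (2*n+1)+1 by ring,
      Finset.sum_Icc_succ_top (by omega), Finset.sum_Icc_succ_top (by omega),
      add_assoc]

/-- In `R = (ZMod 2)[x, y]` with the derivation `D` satisfying `D x = x^2`,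
`D y = y^2`: for every `q ≥ 0`, the diagonal sum
`∑_{a=1}^{2^(q+2)-2} x^a y^(2^(q+2)-1-a)` lies in the range of `D`. -/
theorem stmt2
    (D : Derivation (ZMod 2) (MvPolynomial (Fin 2) (ZMod 2))
      (MvPolynomial (Fin 2) (ZMod 2)))
    (hx : D (X 0) = X 0 ^ 2) (hy : D (X 1) = X 1 ^ 2)
    (q : ℕ) :
    (∑ a ∈ Finset.Icc 1 (2 ^ (q + 2) - 2),
        X 0 ^ a * X 1 ^ (2 ^ (q + 2) - 1 - a)) ∈ Set.range (⇑D) := by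
  set e := 2 ^ (q + 1) with he
  have he2 : 2 ≤ e := by
    rw [he]
    calc 2 = 2 ^ 1 := by norm_num
    _ ≤ 2 ^ (q+1) := Nat.pow_le_pow_right (by norm_num) (by omega)
  have hpow : 2 ^ (q + 2) = 2 * e := by rw [he, pow_succ]; ring
  refine ⟨∑ j ∈ range (e-1), X 0 ^ (2*j+1) * X 1 ^ (2*e-3-2*j), ?_⟩
  rw [map_sum, hpow, show 2*e - 2 = 2*(e-1) by omega, sum_Icc_pair]
  refine Finset.sum_congr rfl fun j hj => ?_
  have hj' : j ≤ e - 2 := by simp at hj; omega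
  rw [Dkey D hx hy ⟨j, by ring⟩ ⟨e-2-j, by omega⟩,
    show 2*e - 1 - (2*j+1) = 2*e-3-2*j+1 by omega,
    show 2*e - 1 - (2*j+2) = 2*e-3-2*j by omega,
    show 2*j+1+1 = 2*j+2 by ring]
  ring
end

section
/- Fix a natural number q ≥ 0 and let h : R → ZMod 2 be any (ZMod 2)-linear map that vanishes on the range of the derivation D (i.e. h(D(r)) = 0 for all r ∈ R). Then h(∑_{a=1}^{2^{q+2}-2} x^a y^{2^{q+2}-1-a}) = 0. -/
/-! In characteristic 2 a derivation with `D x = x ^ 2` and `D y = y ^ 2` satisfies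
`D (x ^ a * y ^ b) = x ^ (a + 1) * y ^ b + x ^ a * y ^ (b + 1)` whenever `a` and `b` are odd.
The terms of `∑_{a=1}^{2m} x^a y^(2m+1-a)` therefore group into pairs `a = 2k+1, 2k+2`, each of
which is `D (x^(2k+1) y^(2m-2k-1))`, so the sum lies in the range of `D` and is killed by `h`. -/

open MvPolynomial Finset

namespace Derivation

variable {R A : Type*} [CommSemiring R]

theorem map_pow_of_map_eq_sq [CommSemiring A] [Algebra R A] (D : Derivation R A A) {x : A}
    (hx : D x = x ^ 2) (n : ℕ) : D (x ^ n) = n • x ^ (n + 1) := by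
  rcases n with _ | n
  · simp
  · rw [D.leibniz_pow, hx, smul_eq_mul, ← pow_add, Nat.add_sub_cancel]

variable [CommRing A] [CharP A 2] [Algebra R A] (D : Derivation R A A) {x y : A}

theorem map_pow_mul_pow_of_odd (hx : D x = x ^ 2) (hy : D y = y ^ 2) {a b : ℕ}
    (ha : Odd a) (hb : Odd b) :
    D (x ^ a * y ^ b) = x ^ (a + 1) * y ^ b + x ^ a * y ^ (b + 1) := by
  have two_eq_zero : (2 : A) = 0 := CharTwo.two_eq_zero
  rw [D.leibniz, D.map_pow_of_map_eq_sq hx, D.map_pow_of_map_eq_sq hy, nsmul_eq_mul,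
    nsmul_eq_mul, natCast_eq_one_of_odd_of_two_eq_zero ha two_eq_zero,
    natCast_eq_one_of_odd_of_two_eq_zero hb two_eq_zero, smul_eq_mul, smul_eq_mul]
  ring

theorem sum_Icc_pow_mul_pow_eq_map_sum (hx : D x = x ^ 2) (hy : D y = y ^ 2) {m n : ℕ}
    (hmn : m ≤ n) :
    ∑ a ∈ Icc 1 (2 * m), x ^ a * y ^ (2 * n + 1 - a) =
      D (∑ k ∈ range m, x ^ (2 * k + 1) * y ^ (2 * (n - k) - 1)) := by
  induction m with
  | zero => simp
  | succ m ih =>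
    have hmn' : m < n := hmn
    have pair : D (x ^ (2 * m + 1) * y ^ (2 * (n - m) - 1)) =
        x ^ (2 * m + 1) * y ^ (2 * n + 1 - (2 * m + 1)) +
          x ^ (2 * m + 1 + 1) * y ^ (2 * n + 1 - (2 * m + 1 + 1)) := by
      rw [D.map_pow_mul_pow_of_odd hx hy ⟨m, rfl⟩ ⟨n - m - 1, by omega⟩, add_comm]
      congr 3 <;> omega
    have Icc_one : ∀ k, Icc 1 k = Ioc 0 k := Icc_add_one_left_eq_Ioc 0
    rw [Icc_one, Nat.mul_succ, sum_Ioc_succ_top (by omega), sum_Ioc_succ_top (by omega),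
      ← Icc_one, ih hmn'.le, sum_range_succ, map_add, pair, add_assoc]

end Derivation

/-- In `R = (ZMod 2)[x, y]` with the derivation `D` satisfying `D x = x^2`,
`D y = y^2`: any `(ZMod 2)`-linear map `h : R → ZMod 2` vanishing on the range
of `D` kills the diagonal sum `∑_{a=1}^{2^(q+2)-2} x^a y^(2^(q+2)-1-a)`. -/
theorem stmt3
    (D : Derivation (ZMod 2) (MvPolynomial (Fin 2) (ZMod 2))
      (MvPolynomial (Fin 2) (ZMod 2)))
    (hx : D (X 0) = X 0 ^ 2) (hy : D (X 1) = X 1 ^ 2)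
    (q : ℕ)
    (h : MvPolynomial (Fin 2) (ZMod 2) →ₗ[ZMod 2] ZMod 2)
    (hD : ∀ r, h (D r) = 0) :
    h (∑ a ∈ Finset.Icc 1 (2 ^ (q + 2) - 2),
        X 0 ^ a * X 1 ^ (2 ^ (q + 2) - 1 - a)) = 0 := by
  obtain ⟨m, hm⟩ : ∃ m, 2 ^ (q + 2) = 2 * m + 2 :=
    ⟨2 ^ (q + 1) - 1, by have := Nat.one_le_two_pow (n := q + 1); rw [pow_succ]; omega⟩
  have hdeg : 2 ^ (q + 2) - 1 = 2 * m + 1 := by omega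
  rw [hm, Nat.add_sub_cancel, ← hm, hdeg, D.sum_Icc_pow_mul_pow_eq_map_sum hx hy le_rfl, hD]
end
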